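/- arXiv:math/0104214 — 3 statements merged into one kernel-verified Lean document; each statement's English description precedes it below -/
import Mathlib

section
/- Let A₁→A₂→A₃→A₄→A₅ and B₁→B₂→B₃→B₄→B₅ be two exact sequences of abelian groups of the form 0→A₁→A₂ --f→ A₃→A₄→A₅→0 and 0→B₁→B₂ --g→ B₃→B₄→B₅→0, and let αᵢ : Aᵢ → Bᵢ (i = 1,…,5) be homomorphisms making every square of the resulting ladder diagram commute; write η = α₃, λ = α₄, μ = α₅, and let η̄ : A₃ → B₃/im(g) be the composite of η with the canonical quotient map B₃ → B₃/im(g). Then im(f) ⊆ ker(η̄) and the sequence 0 → im(f) → ker(η̄) → ker(λ) → ker(μ) → coker(η̄) is exact, where the first map is the inclusion, the second and third maps are the restrictions of the maps A₃ → A₄ and A₄ → A₅, and the last map is the connecting homomorphism sending x ∈ ker(μ) to the class in coker(η̄) of the unique preimage in B₃/im(g) of the image in B₄ of any lift of x to A₄. -/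
/-- Proposition 1.6 of the paper, a variant of the snake lemma.
Given two five-term exact sequences `0 → A₁ → A₂ --f→ A₃ → A₄ → A₅ → 0` and
`0 → B₁ → B₂ --g→ B₃ → B₄ → B₅ → 0` of abelian groups, vertical maps
`α₁, …, α₅` (with `η = α₃`, `lam = α₄`, `mu = α₅`) making every square commute,
and `ηbar : A₃ → B₃/im g` the composite of `η` with the quotient map, one has
`im f ⊆ ker ηbar` and the sequence
`0 → im f → ker ηbar → ker lam → ker mu → coker ηbar` is exact, where the first
map is the inclusion, the next two are restrictions of `A₃ → A₄` and
`A₄ → A₅`, and `δ : ker mu → coker ηbar` is the connecting homomorphism sending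
`y` to the class in `coker ηbar` of the unique preimage in `B₃/im g` of the
image in `B₄` of any lift of `y` to `A₄`.  Exactness is expressed elementwise. -/
theorem snake_variant
    {A₁ A₂ A₃ A₄ A₅ B₁ B₂ B₃ B₄ B₅ : Type*}
    [AddCommGroup A₁] [AddCommGroup A₂] [AddCommGroup A₃] [AddCommGroup A₄]
    [AddCommGroup A₅] [AddCommGroup B₁] [AddCommGroup B₂] [AddCommGroup B₃]
    [AddCommGroup B₄] [AddCommGroup B₅]
    -- the rows
    (f₁ : A₁ →+ A₂) (f : A₂ →+ A₃) (d₃ : A₃ →+ A₄) (d₄ : A₄ →+ A₅)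
    (g₁ : B₁ →+ B₂) (g : B₂ →+ B₃) (e₃ : B₃ →+ B₄) (e₄ : B₄ →+ B₅)
    -- exactness of the top row
    (hA₁ : Function.Injective f₁) (hA₂ : f₁.range = f.ker)
    (hA₃ : f.range = d₃.ker) (hA₄ : d₃.range = d₄.ker)
    (hA₅ : Function.Surjective d₄)
    -- exactness of the bottom row
    (hB₁ : Function.Injective g₁) (hB₂ : g₁.range = g.ker)
    (hB₃ : g.range = e₃.ker) (hB₄ : e₃.range = e₄.ker)
    (hB₅ : Function.Surjective e₄)
    -- the vertical maps
    (α₁ : A₁ →+ B₁) (α₂ : A₂ →+ B₂) (η : A₃ →+ B₃) (lam : A₄ →+ B₄)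
    (mu : A₅ →+ B₅)
    -- commutativity of the squares
    (hc₁ : ∀ a, α₂ (f₁ a) = g₁ (α₁ a)) (hc₂ : ∀ a, η (f a) = g (α₂ a))
    (hc₃ : ∀ a, lam (d₃ a) = e₃ (η a)) (hc₄ : ∀ a, mu (d₄ a) = e₄ (lam a))
    -- `ηbar` is `η` followed by the quotient map `B₃ → B₃/im g`
    (ηbar : A₃ →+ B₃ ⧸ g.range)
    (hηbar : ∀ a, ηbar a = QuotientAddGroup.mk' g.range (η a))
    -- the connecting homomorphism `δ : ker mu → coker ηbar`
    (δ : mu.ker →+ (B₃ ⧸ g.range) ⧸ ηbar.range)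
    (hδ : ∀ (y : mu.ker) (x : A₄), d₄ x = (y : A₅) → ∀ b : B₃, e₃ b = lam x →
      δ y = QuotientAddGroup.mk' ηbar.range (QuotientAddGroup.mk' g.range b)) :
    -- `im f ⊆ ker ηbar`
    (∀ a₂ : A₂, ηbar (f a₂) = 0) ∧
    -- exactness at `ker ηbar`
    (∀ a₃ : A₃, ηbar a₃ = 0 → (d₃ a₃ = 0 ↔ ∃ a₂, f a₂ = a₃)) ∧
    -- exactness at `ker lam`
    (∀ a₄ : A₄, lam a₄ = 0 → (d₄ a₄ = 0 ↔ ∃ a₃, ηbar a₃ = 0 ∧ d₃ a₃ = a₄)) ∧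
    -- exactness at `ker mu`
    (∀ y : mu.ker, δ y = 0 ↔ ∃ a₄, lam a₄ = 0 ∧ d₄ a₄ = (y : A₅)) := by
  constructor
  · intro a₂
    rw [hηbar, hc₂]
    exact (QuotientAddGroup.eq_zero_iff _).mpr ⟨α₂ a₂, rfl⟩
  refine ⟨?_, ?_, ?_⟩
  · intro a₃ _
    constructor
    · intro h
      have : a₃ ∈ f.range := hA₃ ▸ h
      obtain ⟨a₂, h₂⟩ := this
      exact ⟨a₂, h₂⟩
    · rintro ⟨a₂, rfl⟩
      have : f a₂ ∈ d₃.ker := hA₃ ▸ ⟨a₂, rfl⟩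
      exact this
  · intro a₄ hlam
    constructor
    · intro h
      have : a₄ ∈ d₃.range := hA₄ ▸ h
      obtain ⟨a₃, rfl⟩ := this
      refine ⟨a₃, ?_, rfl⟩
      rw [hηbar]
      have hη : η a₃ ∈ e₃.ker := by
        show e₃ (η a₃) = 0
        rw [← hc₃, hlam]
      have : η a₃ ∈ g.range := hB₃ ▸ hη
      exact (QuotientAddGroup.eq_zero_iff _).mpr this
    · rintro ⟨a₃, -, rfl⟩
      have : d₃ a₃ ∈ d₄.ker := hA₄ ▸ ⟨a₃, rfl⟩
      exact this
  · intro y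
    constructor
    · intro h
      obtain ⟨x, hx⟩ := hA₅ (y : A₅)
      have hlamx : lam x ∈ e₄.ker := by
        show e₄ (lam x) = 0
        rw [← hc₄, hx, y.2]
      have : lam x ∈ e₃.range := hB₄ ▸ hlamx
      obtain ⟨b, hb⟩ := this
      have hδy := hδ y x hx b hb
      rw [hδy] at h
      have hmem : (QuotientAddGroup.mk' g.range b) ∈ ηbar.range :=
        (QuotientAddGroup.eq_zero_iff _).mp h
      obtain ⟨a₃, ha₃⟩ := hmem
      rw [hηbar] at ha₃
      have : b - η a₃ ∈ g.range := by
        have := QuotientAddGroup.eq_iff_sub_mem.mp ha₃.symm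
        simpa using this
      obtain ⟨a₂, ha₂⟩ := this
      refine ⟨x - d₃ a₃, ?_, ?_⟩
      · have hg : g a₂ ∈ e₃.ker := hB₃ ▸ ⟨a₂, rfl⟩
        have hg0 : e₃ (g a₂) = 0 := hg
        rw [ha₂] at hg0
        have : lam (x - d₃ a₃) = e₃ b - e₃ (η a₃) := by
          rw [map_sub, hc₃, hb]
        rw [this, ← map_sub, hg0]
      · have : d₃ a₃ ∈ d₄.ker := hA₄ ▸ ⟨a₃, rfl⟩
        have h0 : d₄ (d₃ a₃) = 0 := this
        rw [map_sub, h0, sub_zero, hx]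
    · rintro ⟨a₄, hlam, hd₄⟩
      have := hδ y a₄ hd₄ 0 (by rw [map_zero, hlam])
      rw [this, map_zero, map_zero]
end

section
/- Let S be a finite nonempty index set and for each v ∈ S let n_v be a positive integer. Let Σ : ⊕_{v∈S} (1/n_v)ℤ/ℤ → ℚ/ℤ be the homomorphism from the direct sum of the n_v-torsion subgroups of ℚ/ℤ to ℚ/ℤ defined by Σ((x_v)_v) = Σ_{v∈S} x_v. Then the kernel of Σ is a finite group whose order equals (∏_{v∈S} n_v) / lcm_{v∈S}(n_v). -/
/-!
The image of `σ` is killed by `L = lcm n` and contains every `T v`, a group of order `n v`.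
Since the `L`-torsion of `ℚ/ℤ` is cyclic of order `L`, the order of the image both divides `L`
and is divisible by every `n v`, so it is `L`; the first isomorphism theorem then gives
`|ker σ| = (∏ n v) / L`.
-/

open AddSubgroup DirectSum

namespace AddCircle

variable {𝕜 : Type*} [Field 𝕜] [LinearOrder 𝕜] [IsStrictOrderedRing 𝕜] {p : 𝕜} [Fact (0 < p)]
  {n : ℕ}

theorem mem_zmultiples_period_div_iff (hn : 0 < n) {u : AddCircle p} :
    u ∈ zmultiples ((p / n : 𝕜) : AddCircle p) ↔ n • u = 0 := by
  constructor
  · rintro ⟨k, rfl⟩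
    have h := addOrderOf_nsmul_eq_zero ((p / n : 𝕜) : AddCircle p)
    rw [addOrderOf_period_div hn] at h
    rw [smul_comm, h, smul_zero]
  · intro h
    obtain ⟨m, -, rfl⟩ := (AddCircle.nsmul_eq_zero_iff hn).1 h
    rw [natCast_div_mul_eq_nsmul]
    exact nsmul_mem (mem_zmultiples _) m

theorem natCard_zmultiples_period_div (hn : 0 < n) :
    Nat.card (zmultiples ((p / n : 𝕜) : AddCircle p)) = n := by
  rw [Nat.card_zmultiples, addOrderOf_period_div hn]

theorem natCard_eq_of_mem_iff_nsmul_eq_zero {H : AddSubgroup (AddCircle p)} (hn : 0 < n)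
    (hH : ∀ u, u ∈ H ↔ n • u = 0) : Nat.card H = n := by
  have : H = zmultiples ((p / n : 𝕜) : AddCircle p) := by
    ext u; rw [hH, mem_zmultiples_period_div_iff hn]
  rw [this, natCard_zmultiples_period_div hn]

theorem natCard_dvd_of_forall_nsmul_eq_zero {H : AddSubgroup (AddCircle p)} (hn : 0 < n)
    (hH : ∀ u ∈ H, n • u = 0) : Nat.card H ∣ n := by
  have : H ≤ zmultiples ((p / n : 𝕜) : AddCircle p) := fun u hu =>
    (mem_zmultiples_period_div_iff hn).2 (hH u hu)
  simpa only [natCard_zmultiples_period_div hn] using card_dvd_of_le this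

end AddCircle

theorem DirectSum.natCard_eq_prod {ι : Type*} [Fintype ι] (β : ι → Type*)
    [∀ i, AddCommMonoid (β i)] : Nat.card (⨁ i, β i) = ∏ i, Nat.card (β i) := by
  rw [Nat.card_congr (DirectSum.addEquivProd β).toEquiv, Nat.card_pi]

theorem AddMonoidHom.natCard_range_mul_natCard_ker {G H : Type*} [AddGroup G] [AddGroup H]
    (f : G →+ H) : Nat.card f.range * Nat.card f.ker = Nat.card G := by
  rw [← Nat.card_congr (QuotientAddGroup.quotientKerEquivRange f).toEquiv,
    ← card_eq_card_quotient_mul_card_addSubgroup]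

section SumMap

variable {ι A : Type*} [Fintype ι] [AddCommGroup A] {T : ι → AddSubgroup A}
  {σ : (⨁ i, T i) →+ A}

theorem le_range_of_eq_sum [DecidableEq ι] (hσ : ∀ x, σ x = ∑ i, (x i : A)) (i : ι) :
    T i ≤ σ.range := by
  intro a ha
  refine ⟨of (fun i => T i) i ⟨a, ha⟩, ?_⟩
  rw [hσ, Fintype.sum_eq_single i fun j hj => by rw [of_eq_of_ne _ _ _ hj]; rfl, of_eq_same]

theorem nsmul_eq_zero_of_mem_range_of_eq_sum (hσ : ∀ x, σ x = ∑ i, (x i : A)) {m : ℕ}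
    (hm : ∀ i, ∀ a ∈ T i, m • a = 0) : ∀ y ∈ σ.range, m • y = 0 := by
  rintro _ ⟨x, rfl⟩
  rw [hσ, Finset.smul_sum]
  exact Finset.sum_eq_zero fun i _ => hm i _ (x i).2

end SumMap

theorem card_ker_sum_torsion_general {S : Type*} [Fintype S]
    (n : S → ℕ) (hn : ∀ v, 0 < n v)
    (T : S → AddSubgroup (ℚ ⧸ AddSubgroup.zmultiples (1 : ℚ)))
    (hT : ∀ v x, x ∈ T v ↔ n v • x = 0)
    (σ : DirectSum S (fun v => ↥(T v)) →+ ℚ ⧸ AddSubgroup.zmultiples (1 : ℚ))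
    (hσ : ∀ x : DirectSum S (fun v => ↥(T v)), σ x = ∑ v, ((x v : ↥(T v)) : ℚ ⧸ AddSubgroup.zmultiples (1 : ℚ))) :
    Finite σ.ker ∧ Nat.card σ.ker = (∏ v, n v) / Finset.univ.lcm n := by
  have : Fact ((0 : ℚ) < 1) := ⟨one_pos⟩
  have hL : 0 < Finset.univ.lcm n :=
    Nat.pos_of_ne_zero (Finset.lcm_ne_zero_iff.2 fun v _ => (hn v).ne')
  have hcard v : Nat.card (T v) = n v :=
    AddCircle.natCard_eq_of_mem_iff_nsmul_eq_zero (hn v) (hT v)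
  have (v : S) : Finite (T v) := Nat.finite_of_card_ne_zero ((hcard v).trans_ne (hn v).ne')
  have : Finite (⨁ v, T v) := Finite.of_equiv _ (addEquivProd fun v => T v).symm.toEquiv
  have hrange : Nat.card σ.range = Finset.univ.lcm n := by
    refine Nat.dvd_antisymm (AddCircle.natCard_dvd_of_forall_nsmul_eq_zero hL
      (nsmul_eq_zero_of_mem_range_of_eq_sum hσ fun v a ha => ?_)) (Finset.lcm_dvd fun v _ => ?_)
    · obtain ⟨k, hk⟩ := Finset.dvd_lcm (f := n) (Finset.mem_univ v)
      rw [hk, mul_comm, mul_smul, (hT v a).1 ha, smul_zero]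
    · classical exact hcard v ▸ card_dvd_of_le (le_range_of_eq_sum hσ v)
  refine ⟨inferInstance, ?_⟩
  rw [← Finset.prod_congr rfl fun v _ => hcard v, ← natCard_eq_prod,
    ← σ.natCard_range_mul_natCard_ker, hrange, Nat.mul_div_cancel_left _ hL]

/-- Let `S` be a finite nonempty index set and, for each `v ∈ S`,
let `n v` be a positive integer.  Let `T v` be the `n v`-torsion subgroup
`(1/n v)ℤ/ℤ` of `ℚ/ℤ`, and let `σ : ⨁_{v ∈ S} T v → ℚ/ℤ` be the summation map
`σ (x_v)_v = ∑_v x_v`.  Then the kernel of `σ` is a finite group of order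
`(∏_v n v) / lcm_v (n v)`. -/
theorem card_ker_sum_torsion {S : Type*} [Fintype S] [DecidableEq S] [Nonempty S]
    (n : S → ℕ) (hn : ∀ v, 0 < n v)
    (T : S → AddSubgroup (ℚ ⧸ AddSubgroup.zmultiples (1 : ℚ)))
    (hT : ∀ v x, x ∈ T v ↔ n v • x = 0)
    (σ : DirectSum S (fun v => ↥(T v)) →+ ℚ ⧸ AddSubgroup.zmultiples (1 : ℚ))
    (hσ : ∀ x : DirectSum S (fun v => ↥(T v)), σ x = ∑ v, ((x v : ↥(T v)) : ℚ ⧸ AddSubgroup.zmultiples (1 : ℚ))) :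
    Finite σ.ker ∧ Nat.card σ.ker = (∏ v, n v) / Finset.univ.lcm n :=
  card_ker_sum_torsion_general n hn T hT σ hσ
end

section
/- Let S be a finite nonempty index set, let m be a positive integer, and for each v ∈ S let m_v be a positive divisor of m. Let D : ℤ/mℤ → ⊕_{v∈S} ℤ/m_vℤ be the diagonal homomorphism sending the class of x mod m to the tuple of classes (x mod m_v)_{v∈S}. Then the cokernel of D is a finite group whose order equals (∏_{v∈S} m_v) / lcm_{v∈S}(m_v). -/
/-- Let `S` be a finite nonempty index set, `m` a positive
integer, and for each `v ∈ S` let `mv v` be a positive divisor of `m`.  Let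
`D : ℤ/mℤ → ⨁_{v ∈ S} ℤ/(mv v)ℤ` be the diagonal map given componentwise by
reduction mod `mv v`.  Then the cokernel of `D` is a finite group of order
`(∏_v mv v) / lcm_v (mv v)`. -/
theorem card_coker_diagonal_zmod {S : Type*} [Fintype S] [DecidableEq S] [Nonempty S]
    (m : ℕ) (hm : 0 < m) (mv : S → ℕ) (hmv : ∀ v, 0 < mv v)
    (hdvd : ∀ v, mv v ∣ m)
    (D : ZMod m →+ DirectSum S (fun v => ZMod (mv v)))
    (hD : ∀ (x : ZMod m) (v : S), (D x) v = ZMod.castHom (hdvd v) (ZMod (mv v)) x) :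
    Finite (DirectSum S (fun v => ZMod (mv v)) ⧸ D.range) ∧
      Nat.card (DirectSum S (fun v => ZMod (mv v)) ⧸ D.range) =
        (∏ v, mv v) / Finset.univ.lcm mv := by
  haveI : NeZero m := ⟨hm.ne'⟩
  haveI : ∀ v, NeZero (mv v) := fun v => ⟨(hmv v).ne'⟩
  set L : ℕ := Finset.univ.lcm mv with hL
  have hLdvd : L ∣ m := Finset.lcm_dvd fun v _ => hdvd v
  have hLdvdP : L ∣ ∏ v, mv v :=
    Finset.lcm_dvd fun v _ => Finset.dvd_prod_of_mem mv (Finset.mem_univ v)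
  -- the codomain is finite of cardinality ∏ mv
  have e : DirectSum S (fun v => ZMod (mv v)) ≃+ ((v : S) → ZMod (mv v)) :=
    DirectSum.addEquivProd _
  haveI : Finite (DirectSum S (fun v => ZMod (mv v))) := Finite.of_equiv _ e.symm.toEquiv
  have hcard : Nat.card (DirectSum S (fun v => ZMod (mv v))) = ∏ v, mv v := by
    rw [Nat.card_congr e.toEquiv, Nat.card_pi]
    simp [Nat.card_zmod]
  haveI : Finite (DirectSum S (fun v => ZMod (mv v)) ⧸ D.range) := Quotient.finite _
  refine ⟨inferInstance, ?_⟩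
  have hLpos : 0 < L := Nat.pos_of_ne_zero fun h => by
    rw [h] at hLdvd; exact hm.ne' (Nat.eq_zero_of_zero_dvd hLdvd)
  haveI : NeZero L := ⟨hLpos.ne'⟩
  -- the map to ZMod L
  let φ : ZMod m →+ ZMod L := (ZMod.castHom hLdvd (ZMod L)).toAddMonoidHom
  have hφsurj : Function.Surjective φ := by
    intro y
    obtain ⟨n, rfl⟩ := ZMod.natCast_zmod_surjective y
    exact ⟨(n : ZMod m), by simp [φ]⟩
  have hker : D.ker = φ.ker := by
    ext x
    have hx : ∀ d : ℕ, ∀ h : d ∣ m, (ZMod.castHom h (ZMod d)) x = (x.val : ZMod d) := by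
      intro d h
      rw [ZMod.castHom_apply, ZMod.natCast_val]
    simp only [AddMonoidHom.mem_ker]
    constructor
    · intro h0
      have : ∀ v, (D x) v = 0 := fun v => by rw [h0]; rfl
      have hv : ∀ v, mv v ∣ x.val := by
        intro v
        have := this v
        rw [hD, hx] at this
        exact (ZMod.natCast_eq_zero_iff _ _).mp this
      have : L ∣ x.val := Finset.lcm_dvd fun v _ => hv v
      show (ZMod.castHom hLdvd (ZMod L)) x = 0
      rw [hx]
      exact (ZMod.natCast_eq_zero_iff _ _).mpr this
    · intro h0
      have hLx : L ∣ x.val := by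
        rw [show φ x = (x.val : ZMod L) from hx L hLdvd] at h0
        exact (ZMod.natCast_eq_zero_iff _ _).mp h0
      refine DFinsupp.ext fun v => ?_
      rw [hD, hx]
      exact (ZMod.natCast_eq_zero_iff _ _).mpr
        ((Finset.dvd_lcm (Finset.mem_univ v)).trans hLx)
  have hrange : Nat.card D.range = L := by
    have e1 : (ZMod m ⧸ D.ker) ≃+ D.range := QuotientAddGroup.quotientKerEquivRange D
    have e2 : (ZMod m ⧸ φ.ker) ≃+ ZMod L :=
      QuotientAddGroup.quotientKerEquivOfSurjective φ hφsurj
    rw [← Nat.card_congr e1.toEquiv, hker, Nat.card_congr e2.toEquiv, Nat.card_zmod]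
  have hLag := AddSubgroup.card_eq_card_quotient_mul_card_addSubgroup D.range
  rw [hcard, hrange] at hLag
  rw [hLag, Nat.mul_div_cancel _ hLpos]
end
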